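/- Set l_n = c^n_{x₀,x₁}, the conductance between the two leftmost bottom-row points for the set E_n⁺ computed at level n. Then l_1 = 20/9, and for every n ≥ 1: l_{n+1} = (5/3)·l_n + 98·25^{n+1}·(10·3^{n+1} + 39·10^{n+1}) / ((3^{n+1} + 6·10^{n+1})·(5·3^{n+1} + 16·10^{n+1})·(5·3^{n+1} + 9·10^{n+1})). -/

import Mathlib

/-!
The energy is self-similar, `E_{n+1}(u) = 5/3 ∑ᵢ E_n(u ∘ F_i)`, and two cells `F_i(V_n)`,
`F_j(V_n)` meet only in the junction point `F_i(q_j) = F_j(q_i)`, so minimizers can be glued cell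
by cell. On `V₀` this is the classical renormalization: the trace of `E_n` on `{q₀, q₁, q₂}` is
`E₀`, attained by the "2/5 – 2/5 – 1/5" harmonic extension.

For `E_n⁺`, take data `s₀, s₁` at `x₀, x₁`, `t` at `q₀` and `0` on the rest of the bottom row.
For `n ≥ 1` the level-`(n+1)` problem splits into the top cell (trace `E₀`), the bottom-left cell
(the level-`n` problem with data `s₀, s₁, α`) and the bottom-right cell (data `0, 0, β`), where
`α, β` are the values at the two upper junctions. Eliminating `α, β` is a `2 × 2` Schur
complement, so by induction from a direct computation at `n = 1` the minimal energy is a quadratic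
form in `(s₀, s₁, t)` whose `t²`, `s₀t`, `s₁t` coefficients are `14·10ⁿ/Dₙ`, `-7·5ⁿ/Dₙ`,
`-14·5ⁿ/Dₙ` with `Dₙ = 3ⁿ + 6·10ⁿ`. The conductance `l_n` is minus its `s₀s₁` coefficient, and the
Schur complement step for that coefficient is the stated recurrence.
-/

open scoped BigOperators

noncomputable section

namespace SGPaper

/-- The three corners of the Sierpinski gasket:
`q₀ = (1/2, √3/2)`, `q₁ = (0,0)`, `q₂ = (1,0)`. -/
def q : Fin 3 → ℝ × ℝ
  | 0 => (1 / 2, Real.sqrt 3 / 2)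
  | 1 => (0, 0)
  | 2 => (1, 0)

/-- The contraction map towards corner `i`: `F_i(x) = (x + q_i)/2`. -/
def Fmap (i : Fin 3) (x : ℝ × ℝ) : ℝ × ℝ := (2⁻¹ : ℝ) • (x + q i)

/-- `Fword w = F_{w₁} ∘ ⋯ ∘ F_{w_m}` for the word `w = w₁⋯w_m`. -/
def Fword (w : List (Fin 3)) : ℝ × ℝ → ℝ × ℝ :=
  w.foldr (fun i f => Fmap i ∘ f) id

/-- The level-`m` vertex set of the Sierpinski gasket:
`V_m = ⋃_{|w| = m} F_w({q₀, q₁, q₂})`. -/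
def V (m : ℕ) : Set (ℝ × ℝ) :=
  {x | ∃ w : List (Fin 3), w.length = m ∧ ∃ i : Fin 3, x = Fword w (q i)}

/-- `x` and `y` are `m`-neighbors: they are distinct and belong to a common
level-`m` cell `F_w({q₀, q₁, q₂})`. -/
def Nbr (m : ℕ) (x y : ℝ × ℝ) : Prop :=
  x ≠ y ∧ ∃ w : List (Fin 3), w.length = m ∧
    (∃ i : Fin 3, x = Fword w (q i)) ∧ (∃ j : Fin 3, y = Fword w (q j))

/-- The value `(u x - u y)²` on the unordered pair `{x, y}`. -/
def edgeVal (u : ℝ × ℝ → ℝ) : Sym2 (ℝ × ℝ) → ℝ :=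
  Sym2.lift ⟨fun x y => (u x - u y) ^ 2, fun _ _ => by ring⟩

/-- The unordered pair `e` is an edge of the level-`m` graph `Γ_m`. -/
def IsEdge (m : ℕ) (e : Sym2 (ℝ × ℝ)) : Prop :=
  ∃ x y : ℝ × ℝ, Nbr m x y ∧ e = s(x, y)

/-- The level-`m` graph energy: `E_m(u) = (5/3)^m Σ (u x − u y)²`, the sum being over
unordered `m`-neighbor pairs `{x, y}` (a finite set, so `tsum` is the honest sum). -/
def Energy (m : ℕ) (u : ℝ × ℝ → ℝ) : ℝ :=
  (5 / 3 : ℝ) ^ m * ∑' e : {e : Sym2 (ℝ × ℝ) // IsEdge m e}, edgeVal u e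

/-- `Q_E(v)`: minimal level-`m` energy among functions `u : V_m → ℝ` agreeing
with `v` on `E` (the minimum is attained, so it equals this infimum). -/
def Q (m : ℕ) (E : Set (ℝ × ℝ)) (v : ℝ × ℝ → ℝ) : ℝ :=
  sInf {r | ∃ u : ℝ × ℝ → ℝ, (∀ x ∈ E, u x = v x) ∧ r = Energy m u}

/-- Indicator function of the point `z`. -/
def ind (z : ℝ × ℝ) : ℝ × ℝ → ℝ := fun t => if t = z then 1 else 0

/-- The conductance `c^E_{x,y} = (Q_E(𝟙_x) + Q_E(𝟙_y) − Q_E(𝟙_x + 𝟙_y))/2`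
between `x, y ∈ E`, computed at level `m`. -/
def cond (m : ℕ) (E : Set (ℝ × ℝ)) (x y : ℝ × ℝ) : ℝ :=
  (Q m E (ind x) + Q m E (ind y) - Q m E (ind x + ind y)) / 2

/-- The `j`-th bottom-row point of `V_n`: `x_j = q₁ + (j/2ⁿ)(q₂ − q₁)`. -/
def xb (n j : ℕ) : ℝ × ℝ := q 1 + ((j : ℝ) / 2 ^ n) • (q 2 - q 1)

/-- The bottom row `Ẽ_n = {x₀, …, x_{2ⁿ}}` of `V_n`. -/
def Ebot (n : ℕ) : Set (ℝ × ℝ) := {p | ∃ j ≤ 2 ^ n, p = xb n j}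

/-- The bottom row together with the top point: `E_n⁺ = {q₀, x₀, …, x_{2ⁿ}}`. -/
def Eplus (n : ℕ) : Set (ℝ × ℝ) := insert (q 0) (Ebot n)

lemma Fmap_apply (i : Fin 3) (x : ℝ × ℝ) :
    Fmap i x = ((x.1 + (q i).1) / 2, (x.2 + (q i).2) / 2) := by
  ext <;> simp [Fmap] <;> ring

lemma Fmap_injective (i : Fin 3) : Function.Injective (Fmap i) := fun x y h => by
  simpa [Fmap] using h

lemma two_smul_Fmap_sub (i : Fin 3) (x : ℝ × ℝ) : (2 : ℝ) • Fmap i x - q i = x := by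
  simp [Fmap, smul_smul]

lemma Fmap_q_self (i : Fin 3) : Fmap i (q i) = q i := by
  simp [Fmap, ← two_smul ℝ, smul_smul]

lemma Fmap_q_comm (i j : Fin 3) : Fmap i (q j) = Fmap j (q i) := by
  simp [Fmap, add_comm]

lemma q_injective : Function.Injective q := by
  intro i j h
  fin_cases i <;> fin_cases j <;> simp_all [q, Prod.ext_iff]

def triangle : Set (ℝ × ℝ) :=
  {p | 0 ≤ p.2 ∧ p.2 ≤ √3 * p.1 ∧ p.2 ≤ √3 * (1 - p.1)}

lemma q_mem_triangle (i : Fin 3) : q i ∈ triangle := by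
  have := Real.sqrt_nonneg 3
  fin_cases i <;> simp only [triangle, Set.mem_ofPred_eq, q] <;> refine ⟨?_, ?_, ?_⟩ <;> nlinarith

lemma Fmap_mem_triangle (i : Fin 3) {p : ℝ × ℝ} (hp : p ∈ triangle) : Fmap i p ∈ triangle := by
  obtain ⟨h1, h2, h3⟩ := hp
  have := Real.sqrt_nonneg 3
  rw [Fmap_apply]
  fin_cases i <;> simp only [triangle, Set.mem_ofPred_eq, q] <;> refine ⟨?_, ?_, ?_⟩ <;> nlinarith

lemma V_subset_triangle (m : ℕ) : V m ⊆ triangle := by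
  rintro x ⟨w, -, i, rfl⟩
  induction w with
  | nil => exact q_mem_triangle i
  | cons a w ih => exact Fmap_mem_triangle a ih

lemma eq_q_of_Fmap_eq_Fmap {i j : Fin 3} (hij : i ≠ j) {p p' : ℝ × ℝ}
    (hp : p ∈ triangle) (hp' : p' ∈ triangle) (h : Fmap i p = Fmap j p') :
    p = q j ∧ p' = q i := by
  obtain ⟨a, b⟩ := p
  obtain ⟨a', b'⟩ := p'
  obtain ⟨h1, h2, h3⟩ := hp
  obtain ⟨h1', h2', h3'⟩ := hp'
  have hs : 0 < √3 := by positivity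
  rw [Fmap_apply, Fmap_apply, Prod.ext_iff] at h
  obtain ⟨ha, hb⟩ := h
  fin_cases i <;> fin_cases j <;> simp only [q] at ha hb ⊢ <;>
    simp only [ne_eq, not_true_eq_false] at hij <;>
    refine ⟨Prod.ext ?_ ?_, Prod.ext ?_ ?_⟩ <;> dsimp only at * <;> nlinarith

lemma Fmap_mem_V {n : ℕ} (i : Fin 3) {x : ℝ × ℝ} (hx : x ∈ V n) : Fmap i x ∈ V (n + 1) := by
  obtain ⟨w, hw, a, rfl⟩ := hx
  exact ⟨i :: w, by simp [hw], a, rfl⟩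

lemma q_mem_V (n : ℕ) (i : Fin 3) : q i ∈ V n := by
  induction n with
  | zero => exact ⟨[], rfl, i, rfl⟩
  | succ n ih => exact Fmap_q_self i ▸ Fmap_mem_V i ih

lemma Nbr.mem_V {m : ℕ} {x y : ℝ × ℝ} (h : Nbr m x y) : x ∈ V m ∧ y ∈ V m := by
  obtain ⟨-, w, hw, ⟨i, rfl⟩, ⟨j, rfl⟩⟩ := h
  exact ⟨⟨w, hw, i, rfl⟩, ⟨w, hw, j, rfl⟩⟩

lemma Nbr.Fmap {m : ℕ} {x y : ℝ × ℝ} (h : Nbr m x y) (i : Fin 3) :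
    Nbr (m + 1) (Fmap i x) (Fmap i y) := by
  obtain ⟨hxy, w, hw, ⟨a, rfl⟩, ⟨b, rfl⟩⟩ := h
  exact ⟨(Fmap_injective i).ne hxy, i :: w, by simp [hw], ⟨a, rfl⟩, ⟨b, rfl⟩⟩

lemma IsEdge.map_Fmap {m : ℕ} {e : Sym2 (ℝ × ℝ)} (he : IsEdge m e) (i : Fin 3) :
    IsEdge (m + 1) (e.map (Fmap i)) := by
  obtain ⟨x, y, h, rfl⟩ := he
  exact ⟨_, _, h.Fmap i, Sym2.map_mk _ _ _⟩

lemma isEdge_zero_iff {e : Sym2 (ℝ × ℝ)} :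
    IsEdge 0 e ↔ e = s(q 0, q 1) ∨ e = s(q 0, q 2) ∨ e = s(q 1, q 2) := by
  constructor
  · rintro ⟨x, y, ⟨hxy, w, hw, ⟨i, rfl⟩, ⟨j, rfl⟩⟩, rfl⟩
    obtain rfl := List.length_eq_zero_iff.mp hw
    fin_cases i <;> fin_cases j <;> simp_all [Fword, Sym2.eq_swap]
  · have h : ∀ i j : Fin 3, i ≠ j → IsEdge 0 s(q i, q j) := fun i j hij =>
      ⟨q i, q j, ⟨q_injective.ne hij, [], rfl, ⟨i, rfl⟩, ⟨j, rfl⟩⟩, rfl⟩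
    rintro (rfl | rfl | rfl) <;> exact h _ _ (by decide)

def cellEdge (m : ℕ) (p : Fin 3 × {e : Sym2 (ℝ × ℝ) // IsEdge m e}) :
    {e : Sym2 (ℝ × ℝ) // IsEdge (m + 1) e} :=
  ⟨p.2.1.map (Fmap p.1), p.2.2.map_Fmap p.1⟩

lemma cellEdge_injective (m : ℕ) : Function.Injective (cellEdge m) := by
  rintro ⟨i, ⟨_, x, y, hxy, rfl⟩⟩ ⟨j, ⟨_, x', y', hxy', rfl⟩⟩ h
  simp only [cellEdge, Subtype.mk.injEq, Sym2.map_mk, Sym2.eq_iff] at h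
  obtain ⟨hx, hy⟩ := hxy.mem_V
  obtain ⟨hx', hy'⟩ := hxy'.mem_V
  have hT := V_subset_triangle m
  obtain rfl | hij := eq_or_ne i j
  · have hinj := Fmap_injective i
    rcases h with ⟨h1, h2⟩ | ⟨h1, h2⟩ <;> simp [hinj h1, hinj h2, Sym2.eq_swap]
  · -- both endpoints would be the single common point of two cells
    exfalso
    refine hxy.1 ?_
    rcases h with ⟨h1, h2⟩ | ⟨h1, h2⟩
    · rw [(eq_q_of_Fmap_eq_Fmap hij (hT hx) (hT hx') h1).1,
        (eq_q_of_Fmap_eq_Fmap hij (hT hy) (hT hy') h2).1]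
    · rw [(eq_q_of_Fmap_eq_Fmap hij (hT hx) (hT hy') h1).1,
        (eq_q_of_Fmap_eq_Fmap hij (hT hy) (hT hx') h2).1]

lemma cellEdge_surjective (m : ℕ) : Function.Surjective (cellEdge m) := by
  rintro ⟨_, x, y, ⟨hxy, w, hw, ⟨a, rfl⟩, ⟨b, rfl⟩⟩, rfl⟩
  obtain ⟨c, w, rfl⟩ := List.exists_cons_of_length_eq_add_one hw
  have hnbr : Nbr m (Fword w (q a)) (Fword w (q b)) :=
    ⟨fun h => hxy (congrArg (Fmap c) h), w, by simpa using hw, ⟨a, rfl⟩, ⟨b, rfl⟩⟩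
  exact ⟨⟨c, _, _, _, hnbr, rfl⟩, Subtype.ext (Sym2.map_mk _ _ _)⟩

instance (m : ℕ) : Finite {e : Sym2 (ℝ × ℝ) // IsEdge m e} := by
  induction m with
  | zero =>
    refine Set.Finite.to_subtype (s := {e | IsEdge 0 e}) ?_
    refine (((Set.finite_singleton s(q 1, q 2)).insert s(q 0, q 2)).insert s(q 0, q 1)).subset
      fun e he => ?_
    simpa using isEdge_zero_iff.mp he
  | succ m ih => exact Finite.of_surjective _ (cellEdge_surjective m)

noncomputable instance (m : ℕ) : Fintype {e : Sym2 (ℝ × ℝ) // IsEdge m e} := Fintype.ofFinite _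

lemma edgeVal_mk (u : ℝ × ℝ → ℝ) (x y : ℝ × ℝ) : edgeVal u s(x, y) = (u x - u y) ^ 2 := rfl

lemma edgeVal_map (u : ℝ × ℝ → ℝ) (f : ℝ × ℝ → ℝ × ℝ) (e : Sym2 (ℝ × ℝ)) :
    edgeVal u (e.map f) = edgeVal (u ∘ f) e := by
  induction e using Sym2.ind with
  | _ x y => rfl

lemma Energy_succ (m : ℕ) (u : ℝ × ℝ → ℝ) :
    Energy (m + 1) u =
      5 / 3 * (Energy m (u ∘ Fmap 0) + Energy m (u ∘ Fmap 1) + Energy m (u ∘ Fmap 2)) := by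
  simp only [Energy, tsum_fintype]
  rw [← (Function.Bijective.sum_comp ⟨cellEdge_injective m, cellEdge_surjective m⟩
    (fun e => edgeVal u e.1)), Fintype.sum_prod_type, Fin.sum_univ_three]
  simp only [cellEdge, edgeVal_map]
  ring

lemma Energy_congr {m : ℕ} {u v : ℝ × ℝ → ℝ} (h : ∀ x ∈ V m, u x = v x) :
    Energy m u = Energy m v := by
  unfold Energy
  congr 1
  refine tsum_congr ?_
  rintro ⟨_, x, y, hxy, rfl⟩
  simp only [edgeVal_mk, h x hxy.mem_V.1, h y hxy.mem_V.2]

def triForm (a b c : ℝ) : ℝ := (a - b) ^ 2 + (a - c) ^ 2 + (b - c) ^ 2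

lemma Energy_zero (u : ℝ × ℝ → ℝ) : Energy 0 u = triForm (u (q 0)) (u (q 1)) (u (q 2)) := by
  classical
  have hedges : IsEdge 0 = (· ∈ ({s(q 0, q 1), s(q 0, q 2), s(q 1, q 2)} : Finset _)) := by
    ext e
    simp [isEdge_zero_iff]
  rw [Energy, pow_zero, one_mul, hedges, Finset.tsum_subtype (f := edgeVal u),
    Finset.sum_insert (by simp [q_injective.eq_iff]),
    Finset.sum_insert (by simp [q_injective.eq_iff]), Finset.sum_singleton]
  simp only [edgeVal_mk, triForm]
  ring

lemma exists_glue {n : ℕ} (u₀ u₁ u₂ : ℝ × ℝ → ℝ) (h₀₁ : u₀ (q 1) = u₁ (q 0))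
    (h₀₂ : u₀ (q 2) = u₂ (q 0)) (h₁₂ : u₁ (q 2) = u₂ (q 1)) :
    ∃ u : ℝ × ℝ → ℝ,
      (∀ x ∈ V n, u (Fmap 0 x) = u₀ x ∧ u (Fmap 1 x) = u₁ x ∧ u (Fmap 2 x) = u₂ x) ∧
      Energy (n + 1) u = 5 / 3 * (Energy n u₀ + Energy n u₁ + Energy n u₂) := by
  classical
  set us : Fin 3 → ℝ × ℝ → ℝ := ![u₀, u₁, u₂]
  have hcompat : ∀ i j, us i (q j) = us j (q i) := by
    intro i j
    fin_cases i <;> fin_cases j <;> simp [us, h₀₁, h₀₂, h₁₂]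
  obtain ⟨u, hu⟩ : ∃ u : ℝ × ℝ → ℝ, ∀ i, ∀ x ∈ V n, (u ∘ Fmap i) x = us i x := by
    refine ⟨fun y => if h : ∃ i, ∃ x ∈ V n, Fmap i x = y then
      us h.choose ((2 : ℝ) • y - q h.choose) else 0, fun i x hx => ?_⟩
    have h : ∃ j, ∃ x' ∈ V n, Fmap j x' = Fmap i x := ⟨i, x, hx, rfl⟩
    obtain ⟨x', hx', hj⟩ := h.choose_spec
    simp only [Function.comp_apply, dif_pos h]
    generalize h.choose = j at hj ⊢
    rw [← hj, two_smul_Fmap_sub]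
    obtain rfl | hji := eq_or_ne j i
    · rw [Fmap_injective j hj]
    · obtain ⟨rfl, rfl⟩ := eq_q_of_Fmap_eq_Fmap hji (V_subset_triangle n hx')
        (V_subset_triangle n hx) hj
      exact hcompat _ _
  refine ⟨u, fun x hx => ⟨hu 0 x hx, hu 1 x hx, hu 2 x hx⟩, ?_⟩
  rw [Energy_succ, Energy_congr (hu 0), Energy_congr (hu 1), Energy_congr (hu 2)]
  rfl

lemma triForm_le_cells (c₀ c₁ c₂ x y z : ℝ) :
    triForm c₀ c₁ c₂ ≤ 5 / 3 * (triForm c₀ x y + triForm x c₁ z + triForm y z c₂) := by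
  unfold triForm
  nlinarith [sq_nonneg (5 * x - 2 * c₀ - 2 * c₁ - c₂), sq_nonneg (5 * y - 2 * c₀ - c₁ - 2 * c₂),
    sq_nonneg (5 * z - c₀ - 2 * c₁ - 2 * c₂),
    sq_nonneg ((5 * x - 2 * c₀ - 2 * c₁ - c₂) - (5 * y - 2 * c₀ - c₁ - 2 * c₂)),
    sq_nonneg ((5 * x - 2 * c₀ - 2 * c₁ - c₂) - (5 * z - c₀ - 2 * c₁ - 2 * c₂)),
    sq_nonneg ((5 * y - 2 * c₀ - c₁ - 2 * c₂) - (5 * z - c₀ - 2 * c₁ - 2 * c₂))]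

lemma triForm_eq_cells (c₀ c₁ c₂ : ℝ) :
    let x := (2 * c₀ + 2 * c₁ + c₂) / 5
    let y := (2 * c₀ + c₁ + 2 * c₂) / 5
    let z := (c₀ + 2 * c₁ + 2 * c₂) / 5
    5 / 3 * (triForm c₀ x y + triForm x c₁ z + triForm y z c₂) = triForm c₀ c₁ c₂ := by
  simp only [triForm]
  ring

lemma isLeast_energy_corners (n : ℕ) (c₀ c₁ c₂ : ℝ) :
    IsLeast (Energy n '' {u | u (q 0) = c₀ ∧ u (q 1) = c₁ ∧ u (q 2) = c₂})
      (triForm c₀ c₁ c₂) := by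
  induction n generalizing c₀ c₁ c₂ with
  | zero =>
    classical
    refine ⟨⟨fun y => if y = q 0 then c₀ else if y = q 1 then c₁ else c₂, ?_, ?_⟩, ?_⟩
    · simp [q_injective.eq_iff]
    · simp [Energy_zero, q_injective.eq_iff]
    · rintro _ ⟨u, ⟨h₀, h₁, h₂⟩, rfl⟩
      rw [Energy_zero, h₀, h₁, h₂]
  | succ n ih =>
    constructor
    · obtain ⟨u₀, ⟨hu₀₀, hu₀₁, hu₀₂⟩, hE₀⟩ := (ih c₀ _ _).1
      obtain ⟨u₁, ⟨hu₁₀, hu₁₁, hu₁₂⟩, hE₁⟩ := (ih _ c₁ _).1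
      obtain ⟨u₂, ⟨hu₂₀, hu₂₁, hu₂₂⟩, hE₂⟩ := (ih _ _ c₂).1
      obtain ⟨u, hu, hE⟩ := exists_glue (n := n) u₀ u₁ u₂ (hu₀₁.trans hu₁₀.symm)
        (hu₀₂.trans hu₂₀.symm) (hu₁₂.trans hu₂₁.symm)
      refine ⟨u, ⟨?_, ?_, ?_⟩, ?_⟩
      · rw [← Fmap_q_self, (hu _ (q_mem_V n 0)).1, hu₀₀]
      · rw [← Fmap_q_self, (hu _ (q_mem_V n 1)).2.1, hu₁₁]
      · rw [← Fmap_q_self, (hu _ (q_mem_V n 2)).2.2, hu₂₂]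
      · rw [hE, hE₀, hE₁, hE₂]
        exact triForm_eq_cells c₀ c₁ c₂
    · rintro _ ⟨u, ⟨h₀, h₁, h₂⟩, rfl⟩
      have e₀ := (ih _ _ _).2 ⟨u ∘ Fmap 0, ⟨rfl, rfl, rfl⟩, rfl⟩
      have e₁ := (ih _ _ _).2 ⟨u ∘ Fmap 1, ⟨rfl, rfl, rfl⟩, rfl⟩
      have e₂ := (ih _ _ _).2 ⟨u ∘ Fmap 2, ⟨rfl, rfl, rfl⟩, rfl⟩
      simp only [Function.comp_apply, Fmap_q_self, h₀, h₁, h₂] at e₀ e₁ e₂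
      rw [Fmap_q_comm 1 0] at e₁
      rw [Fmap_q_comm 2 0, Fmap_q_comm 2 1] at e₂
      rw [Energy_succ]
      linarith [triForm_le_cells c₀ c₁ c₂ (u (Fmap 0 (q 1))) (u (Fmap 0 (q 2))) (u (Fmap 1 (q 2)))]

lemma xb_apply (n j : ℕ) : xb n j = ((j : ℝ) / 2 ^ n, 0) := by
  ext <;> simp [xb, q]

lemma xb_zero (n : ℕ) : xb n 0 = q 1 := by
  simp [xb_apply, q]

lemma xb_two_pow (n : ℕ) : xb n (2 ^ n) = q 2 := by
  simp [xb_apply, q]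

lemma Fmap_one_xb (n j : ℕ) : Fmap 1 (xb n j) = xb (n + 1) j := by
  ext <;> simp [xb_apply, Fmap_apply, q, pow_succ]
  ring

lemma Fmap_two_xb (n j : ℕ) : Fmap 2 (xb n j) = xb (n + 1) (2 ^ n + j) := by
  ext <;> simp [xb_apply, Fmap_apply, q, pow_succ]
  field_simp
  ring

lemma xb_mem_V {n j : ℕ} (hj : j ≤ 2 ^ n) : xb n j ∈ V n := by
  induction n generalizing j with
  | zero =>
    obtain rfl | rfl : j = 0 ∨ j = 1 := by omega
    · exact xb_zero 0 ▸ q_mem_V 0 1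
    · exact xb_two_pow 0 ▸ q_mem_V 0 2
  | succ n ih =>
    obtain hj' | hj' := le_or_gt j (2 ^ n)
    · exact Fmap_one_xb n j ▸ Fmap_mem_V 1 (ih hj')
    · obtain ⟨k, rfl⟩ := Nat.exists_eq_add_of_lt hj'
      have hk : k + 1 ≤ 2 ^ n := by rw [pow_succ] at hj; omega
      exact Fmap_two_xb n (k + 1) ▸ Fmap_mem_V 2 (ih hk)

lemma xb_injective (n : ℕ) : Function.Injective (xb n) := by
  intro j j' h
  simpa [xb_apply] using h

lemma q_zero_ne_xb (n j : ℕ) : q 0 ≠ xb n j := by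
  simp [xb_apply, q]

def BottomData (n : ℕ) (s₀ s₁ t : ℝ) (u : ℝ × ℝ → ℝ) : Prop :=
  u (xb n 0) = s₀ ∧ u (xb n 1) = s₁ ∧ u (q 0) = t ∧ ∀ j, 2 ≤ j → j ≤ 2 ^ n → u (xb n j) = 0

namespace BottomData

variable {n : ℕ} {s₀ s₁ t : ℝ} {u : ℝ × ℝ → ℝ}

lemma congr (h : BottomData n s₀ s₁ t u) {v : ℝ × ℝ → ℝ} (huv : ∀ x ∈ V n, u x = v x) :
    BottomData n s₀ s₁ t v := by
  obtain ⟨h₀, h₁, ht, hz⟩ := h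
  refine ⟨?_, ?_, ?_, fun j hj hjn => ?_⟩
  · rw [← huv _ (xb_mem_V (Nat.zero_le _)), h₀]
  · rw [← huv _ (xb_mem_V Nat.one_le_two_pow), h₁]
  · rw [← huv _ (q_mem_V n 0), ht]
  · rw [← huv _ (xb_mem_V hjn), hz j hj hjn]

lemma cell_one (h : BottomData (n + 1) s₀ s₁ t u) :
    BottomData n s₀ s₁ (u (Fmap 1 (q 0))) (u ∘ Fmap 1) := by
  obtain ⟨h₀, h₁, -, hz⟩ := h
  refine ⟨?_, ?_, rfl, fun j hj hjn => ?_⟩ <;> simp only [Function.comp_apply, Fmap_one_xb]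
  · exact h₀
  · exact h₁
  · exact hz j hj (by rw [pow_succ]; omega)

lemma cell_two (hn : 1 ≤ n) (h : BottomData (n + 1) s₀ s₁ t u) :
    BottomData n 0 0 (u (Fmap 2 (q 0))) (u ∘ Fmap 2) := by
  obtain ⟨-, -, -, hz⟩ := h
  have h2n : 2 ≤ 2 ^ n := le_self_pow (by norm_num) (by omega)
  refine ⟨?_, ?_, rfl, fun j hj hjn => ?_⟩ <;> simp only [Function.comp_apply, Fmap_two_xb] <;>
    exact hz _ (by omega) (by rw [pow_succ]; omega)

lemma of_cells {α β : ℝ} (h₁ : BottomData n s₀ s₁ α (u ∘ Fmap 1))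
    (h₂ : BottomData n 0 0 β (u ∘ Fmap 2)) (ht : u (q 0) = t) :
    BottomData (n + 1) s₀ s₁ t u := by
  obtain ⟨h₁₀, h₁₁, -, h₁z⟩ := h₁
  obtain ⟨-, h₂₁, -, h₂z⟩ := h₂
  simp only [Function.comp_apply, Fmap_one_xb, Fmap_two_xb] at h₁₀ h₁₁ h₁z h₂₁ h₂z
  refine ⟨h₁₀, h₁₁, ht, fun j hj hjn => ?_⟩
  obtain hj' | hj' := le_or_gt j (2 ^ n)
  · exact h₁z j hj hj'
  · obtain ⟨k, rfl⟩ := Nat.exists_eq_add_of_lt hj'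
    rw [pow_succ] at hjn
    obtain rfl | hk := eq_or_ne k 0
    · exact h₂₁
    · simpa [add_assoc] using h₂z (k + 1) (by omega) (by omega)

end BottomData

def qform (A₀ A₁ C τ b₀ b₁ s₀ s₁ t : ℝ) : ℝ :=
  A₀ * s₀ ^ 2 + A₁ * s₁ ^ 2 + τ * t ^ 2 + 2 * C * s₀ * s₁ + 2 * b₀ * s₀ * t + 2 * b₁ * s₁ * t

def schurCoef (τ b b' A : ℝ) : ℝ := A - (τ + 2) * b * b' / ((τ + 1) * (τ + 3))

/-- Eliminating the junction values `α, β` of the three cells: the Hessian in `(α, β)` is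
`[[τ + 2, -1], [-1, τ + 2]]`, with determinant `(τ + 1)(τ + 3)`. -/
lemma exists_schur_complement (A₀ A₁ C τ b₀ b₁ s₀ s₁ t : ℝ) (h₁ : τ + 1 ≠ 0) (h₃ : τ + 3 ≠ 0) :
    ∃ α' β' : ℝ, ∀ α β : ℝ,
      triForm t α β + qform A₀ A₁ C τ b₀ b₁ s₀ s₁ α + qform A₀ A₁ C τ b₀ b₁ 0 0 β =
        qform (schurCoef τ b₀ b₀ A₀) (schurCoef τ b₁ b₁ A₁) (schurCoef τ b₀ b₁ C)
            (2 * τ / (τ + 1)) (b₀ / (τ + 1)) (b₁ / (τ + 1)) s₀ s₁ t +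
          (((α - α') - (β - β')) ^ 2 + (τ + 1) * ((α - α') ^ 2 + (β - β') ^ 2)) := by
  set g := t - b₀ * s₀ - b₁ * s₁
  refine ⟨((τ + 2) * g + t) / ((τ + 1) * (τ + 3)), ((τ + 2) * t + g) / ((τ + 1) * (τ + 3)),
    fun α β => ?_⟩
  simp only [triForm, qform, schurCoef, g]
  field_simp
  ring

def den (n : ℕ) : ℝ := 3 ^ n + 6 * 10 ^ n

def topCoef (n : ℕ) : ℝ := 14 * 10 ^ n / den n

def crossCoef₀ (n : ℕ) : ℝ := -(7 * 5 ^ n) / den n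

def crossCoef₁ (n : ℕ) : ℝ := -(14 * 5 ^ n) / den n

lemma topCoef_pos (n : ℕ) : 0 < topCoef n := by
  unfold topCoef den
  positivity

lemma topCoef_add_one (n : ℕ) : topCoef n + 1 = (3 ^ n + 20 * 10 ^ n) / den n := by
  unfold topCoef den
  field_simp
  ring

lemma topCoef_succ (n : ℕ) : topCoef (n + 1) = 5 / 3 * (2 * topCoef n / (topCoef n + 1)) := by
  rw [topCoef_add_one]
  unfold topCoef den
  field_simp
  ring

lemma crossCoef₀_succ (n : ℕ) :
    crossCoef₀ (n + 1) = 5 / 3 * (crossCoef₀ n / (topCoef n + 1)) := by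
  rw [topCoef_add_one]
  unfold crossCoef₀ den
  field_simp
  ring

lemma crossCoef₁_succ (n : ℕ) :
    crossCoef₁ (n + 1) = 5 / 3 * (crossCoef₁ n / (topCoef n + 1)) := by
  rw [topCoef_add_one]
  unfold crossCoef₁ den
  field_simp
  ring

def traceForm (n : ℕ) (A₀ A₁ C s₀ s₁ t : ℝ) : ℝ :=
  qform A₀ A₁ C (topCoef n) (crossCoef₀ n) (crossCoef₁ n) s₀ s₁ t

def IsTraceForm (n : ℕ) (A₀ A₁ C : ℝ) : Prop :=
  ∀ s₀ s₁ t, IsLeast (Energy n '' {u | BottomData n s₀ s₁ t u}) (traceForm n A₀ A₁ C s₀ s₁ t)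

lemma exists_cells_eq_traceForm_succ (n : ℕ) (A₀ A₁ C s₀ s₁ t : ℝ) :
    ∃ α' β' : ℝ, ∀ α β : ℝ,
      5 / 3 * (triForm t α β + traceForm n A₀ A₁ C s₀ s₁ α + traceForm n A₀ A₁ C 0 0 β) =
        traceForm (n + 1) (5 / 3 * schurCoef (topCoef n) (crossCoef₀ n) (crossCoef₀ n) A₀)
            (5 / 3 * schurCoef (topCoef n) (crossCoef₁ n) (crossCoef₁ n) A₁)
            (5 / 3 * schurCoef (topCoef n) (crossCoef₀ n) (crossCoef₁ n) C) s₀ s₁ t +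
          5 / 3 * (((α - α') - (β - β')) ^ 2 +
            (topCoef n + 1) * ((α - α') ^ 2 + (β - β') ^ 2)) := by
  have hτ := topCoef_pos n
  obtain ⟨α', β', h⟩ := exists_schur_complement A₀ A₁ C (topCoef n) (crossCoef₀ n) (crossCoef₁ n)
    s₀ s₁ t (by positivity) (by positivity)
  refine ⟨α', β', fun α β => ?_⟩
  rw [traceForm, traceForm, traceForm, h, topCoef_succ, crossCoef₀_succ, crossCoef₁_succ]
  simp only [qform]
  ring

lemma isTraceForm_one : IsTraceForm 1 (26 / 9) (50 / 9) (-(20 / 9)) := by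
  have hx₀ : Fmap 1 (q 1) = xb 1 0 := by rw [← xb_zero 0, Fmap_one_xb]
  have hx₁ : Fmap 1 (q 2) = xb 1 1 := by rw [← xb_two_pow 0, Fmap_one_xb]; rfl
  have hx₁' : Fmap 2 (q 1) = xb 1 1 := by rw [Fmap_q_comm, hx₁]
  have hx₂ : Fmap 2 (q 2) = xb 1 2 := by rw [← xb_two_pow 0, Fmap_two_xb]; rfl
  intro s₀ s₁ t
  obtain ⟨α', β', hsq⟩ : ∃ α' β' : ℝ, ∀ α β : ℝ,
      5 / 3 * (triForm t α β + triForm α s₀ s₁ + triForm β s₁ 0) =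
        traceForm 1 (26 / 9) (50 / 9) (-(20 / 9)) s₀ s₁ t +
          5 / 3 * (((α - α') - (β - β')) ^ 2 + 3 * ((α - α') ^ 2 + (β - β') ^ 2)) := by
    refine ⟨(5 * t + 4 * s₀ + 5 * s₁) / 15, (5 * t + s₀ + 5 * s₁) / 15, fun α β => ?_⟩
    simp only [triForm, traceForm, qform, topCoef, crossCoef₀, crossCoef₁, den]
    ring
  constructor
  · obtain ⟨u₀, ⟨hu₀₀, hu₀₁, hu₀₂⟩, hE₀⟩ := (isLeast_energy_corners 0 t α' β').1
    obtain ⟨u₁, ⟨hu₁₀, hu₁₁, hu₁₂⟩, hE₁⟩ := (isLeast_energy_corners 0 α' s₀ s₁).1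
    obtain ⟨u₂, ⟨hu₂₀, hu₂₁, hu₂₂⟩, hE₂⟩ := (isLeast_energy_corners 0 β' s₁ 0).1
    obtain ⟨u, hu, hE⟩ := exists_glue (n := 0) u₀ u₁ u₂ (hu₀₁.trans hu₁₀.symm)
      (hu₀₂.trans hu₂₀.symm) (hu₁₂.trans hu₂₁.symm)
    refine ⟨u, ⟨?_, ?_, ?_, fun j hj hj₂ => ?_⟩, ?_⟩
    · rw [← hx₀, (hu _ (q_mem_V 0 1)).2.1, hu₁₁]
    · rw [← hx₁, (hu _ (q_mem_V 0 2)).2.1, hu₁₂]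
    · rw [← Fmap_q_self, (hu _ (q_mem_V 0 0)).1, hu₀₀]
    · obtain rfl : j = 2 := by simp at hj₂; omega
      rw [← hx₂, (hu _ (q_mem_V 0 2)).2.2, hu₂₂]
    · rw [hE, hE₀, hE₁, hE₂, hsq]
      simp
  · rintro _ ⟨u, ⟨h₀, h₁, ht, hz⟩, rfl⟩
    rw [Energy_succ, Energy_zero, Energy_zero, Energy_zero]
    simp only [Function.comp_apply, Fmap_q_self, hx₀, hx₁, hx₁', hx₂, ← Fmap_q_comm 0, h₀, h₁, ht,
      hz 2 le_rfl le_rfl, hsq]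
    exact le_add_of_nonneg_right (by positivity)

lemma IsTraceForm.succ {n : ℕ} (hn : 1 ≤ n) {A₀ A₁ C : ℝ} (h : IsTraceForm n A₀ A₁ C) :
    IsTraceForm (n + 1) (5 / 3 * schurCoef (topCoef n) (crossCoef₀ n) (crossCoef₀ n) A₀)
      (5 / 3 * schurCoef (topCoef n) (crossCoef₁ n) (crossCoef₁ n) A₁)
      (5 / 3 * schurCoef (topCoef n) (crossCoef₀ n) (crossCoef₁ n) C) := by
  intro s₀ s₁ t
  obtain ⟨α', β', hsq⟩ := exists_cells_eq_traceForm_succ n A₀ A₁ C s₀ s₁ t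
  have hrem : ∀ x y : ℝ, 0 ≤ (x - y) ^ 2 + (topCoef n + 1) * (x ^ 2 + y ^ 2) := fun x y =>
    add_nonneg (sq_nonneg _) (mul_nonneg (by linarith [topCoef_pos n]) (by positivity))
  constructor
  · obtain ⟨u₀, ⟨hu₀₀, hu₀₁, hu₀₂⟩, hE₀⟩ := (isLeast_energy_corners n t α' β').1
    obtain ⟨u₁, hu₁, hE₁⟩ := (h s₀ s₁ α').1
    obtain ⟨u₂, hu₂, hE₂⟩ := (h 0 0 β').1
    have h₁₂ : u₁ (q 2) = u₂ (q 1) := by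
      rw [← xb_two_pow, ← xb_zero, hu₁.2.2.2 _ (le_self_pow (by norm_num) (by omega)) le_rfl,
        hu₂.1]
    obtain ⟨u, hu, hE⟩ := exists_glue u₀ u₁ u₂ (hu₀₁.trans hu₁.2.2.1.symm)
      (hu₀₂.trans hu₂.2.2.1.symm) h₁₂
    refine ⟨u, ?_, ?_⟩
    · refine .of_cells (hu₁.congr fun x hx => (hu x hx).2.1.symm)
        (hu₂.congr fun x hx => (hu x hx).2.2.symm) ?_
      rw [← Fmap_q_self, (hu _ (q_mem_V n 0)).1, hu₀₀]
    · rw [hE, hE₀, hE₁, hE₂, hsq]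
      simp
  · rintro _ ⟨u, hu, rfl⟩
    have e₀ := (isLeast_energy_corners n _ _ _).2 ⟨u ∘ Fmap 0, ⟨rfl, rfl, rfl⟩, rfl⟩
    have e₁ := (h _ _ _).2 ⟨u ∘ Fmap 1, hu.cell_one, rfl⟩
    have e₂ := (h _ _ _).2 ⟨u ∘ Fmap 2, hu.cell_two hn, rfl⟩
    simp only [Function.comp_apply, Fmap_q_self, hu.2.2.1, Fmap_q_comm 0] at e₀
    have hcells := hsq (u (Fmap 1 (q 0))) (u (Fmap 2 (q 0)))
    rw [Energy_succ]
    linarith [hrem (u (Fmap 1 (q 0)) - α') (u (Fmap 2 (q 0)) - β')]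

lemma exists_isTraceForm {n : ℕ} (hn : 1 ≤ n) : ∃ A₀ A₁ C, IsTraceForm n A₀ A₁ C := by
  induction n, hn using Nat.le_induction with
  | base => exact ⟨_, _, _, isTraceForm_one⟩
  | succ n hn ih =>
    obtain ⟨A₀, A₁, C, h⟩ := ih
    exact ⟨_, _, _, h.succ hn⟩

lemma forall_mem_Eplus_iff {n : ℕ} {u v : ℝ × ℝ → ℝ}
    (hv : ∀ j, 2 ≤ j → j ≤ 2 ^ n → v (xb n j) = 0) :
    (∀ x ∈ Eplus n, u x = v x) ↔ BottomData n (v (xb n 0)) (v (xb n 1)) (v (q 0)) u := by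
  constructor
  · intro h
    have hxb : ∀ j ≤ 2 ^ n, u (xb n j) = v (xb n j) := fun j hj => h _ (.inr ⟨j, hj, rfl⟩)
    exact ⟨hxb 0 (Nat.zero_le _), hxb 1 Nat.one_le_two_pow, h _ (.inl rfl),
      fun j hj hjn => (hxb j hjn).trans (hv j hj hjn)⟩
  · rintro ⟨h₀, h₁, ht, hz⟩ x (rfl | ⟨j, hj, rfl⟩)
    · exact ht
    · obtain rfl | rfl | hj₂ : j = 0 ∨ j = 1 ∨ 2 ≤ j := by omega
      · exact h₀
      · exact h₁
      · rw [hz j hj₂ hj, hv j hj₂ hj]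

lemma IsTraceForm.Q_eq {n : ℕ} {A₀ A₁ C : ℝ} (h : IsTraceForm n A₀ A₁ C) {v : ℝ × ℝ → ℝ}
    (hv : ∀ j, 2 ≤ j → j ≤ 2 ^ n → v (xb n j) = 0) :
    Q n (Eplus n) v = traceForm n A₀ A₁ C (v (xb n 0)) (v (xb n 1)) (v (q 0)) := by
  rw [Q, ← (h _ _ _).csInf_eq]
  congr 1
  ext r
  simp only [Set.mem_ofPred_eq, Set.mem_image, forall_mem_Eplus_iff hv, eq_comm (a := r)]

lemma ind_xb (n i j : ℕ) : ind (xb n i) (xb n j) = if j = i then 1 else 0 := by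
  simp [ind, (xb_injective n).eq_iff]

lemma ind_xb_q_zero (n i : ℕ) : ind (xb n i) (q 0) = 0 := by
  simp [ind, q_zero_ne_xb]

lemma IsTraceForm.cond_eq {n : ℕ} {A₀ A₁ C : ℝ} (h : IsTraceForm n A₀ A₁ C) :
    cond n (Eplus n) (xb n 0) (xb n 1) = -C := by
  have hv : ∀ i ≤ 1, ∀ j, 2 ≤ j → j ≤ 2 ^ n → ind (xb n i) (xb n j) = 0 :=
    fun i hi j hj _ => by rw [ind_xb, if_neg (by omega)]
  rw [cond, h.Q_eq (hv 0 zero_le_one), h.Q_eq (hv 1 le_rfl),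
    h.Q_eq fun j hj hjn => by simp [hv 0 zero_le_one j hj hjn, hv 1 le_rfl j hj hjn]]
  simp [ind_xb, ind_xb_q_zero, traceForm, qform]
  ring

lemma neg_five_thirds_mul_schurCoef (n : ℕ) (C : ℝ) :
    -(5 / 3 * schurCoef (topCoef n) (crossCoef₀ n) (crossCoef₁ n) C) =
      5 / 3 * -C + 98 * 25 ^ (n + 1) * (10 * 3 ^ (n + 1) + 39 * 10 ^ (n + 1)) /
        ((3 ^ (n + 1) + 6 * 10 ^ (n + 1)) * (5 * 3 ^ (n + 1) + 16 * 10 ^ (n + 1)) *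
          (5 * 3 ^ (n + 1) + 9 * 10 ^ (n + 1))) := by
  have h25 : (25 : ℝ) ^ n = 5 ^ n * 5 ^ n := by rw [← mul_pow]; norm_num
  unfold schurCoef topCoef crossCoef₀ crossCoef₁ den
  simp only [pow_succ, h25]
  field_simp
  ring

/-- With `l_n = c^n_{x₀,x₁}` (conductances of `E_n⁺` at level `n`):
`l₁ = 20/9` and the stated recurrence for `l_{n+1}`. -/
theorem stmt12 :
    cond 1 (Eplus 1) (xb 1 0) (xb 1 1) = 20 / 9 ∧
    ∀ n : ℕ, 1 ≤ n →
      cond (n + 1) (Eplus (n + 1)) (xb (n + 1) 0) (xb (n + 1) 1) =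
        5 / 3 * cond n (Eplus n) (xb n 0) (xb n 1) +
          98 * 25 ^ (n + 1) * (10 * 3 ^ (n + 1) + 39 * 10 ^ (n + 1)) /
            ((3 ^ (n + 1) + 6 * 10 ^ (n + 1)) * (5 * 3 ^ (n + 1) + 16 * 10 ^ (n + 1)) *
              (5 * 3 ^ (n + 1) + 9 * 10 ^ (n + 1))) := by
  refine ⟨by rw [isTraceForm_one.cond_eq, neg_neg], fun n hn => ?_⟩
  obtain ⟨A₀, A₁, C, h⟩ := exists_isTraceForm hn
  rw [(h.succ hn).cond_eq, h.cond_eq, neg_five_thirds_mul_schurCoef]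

end SGPaper
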